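/- arXiv:2410.00530 — 2 statements merged into one kernel-verified Lean document; each statement's English description precedes it below -/
import Mathlib

section
/- Let X be a metric space, λ ≥ 0 and ℓ : X → [0,∞) lsc with inf_X ℓ = 0. If u is a supersolution of the discounted global Eikonal equation (i.e. u is lsc, inf_X u = 0, and λ u(x) + G[u](x) ≥ ℓ(x) for all x), then v := lim_{n→∞} Tⁿ u is a solution: v is lsc, inf_X v = 0, and λ v(x) + G[v](x) = ℓ(x) for all x ∈ X. -/
open Filter Topology ENNReal

/-- The global slope of a nonnegative extended-real valued function `u : X → [0, ∞]`:
`G[u](x) = sup_{y ≠ x} (u x - u y)⁺ / d(x,y)` when `u x < ∞` (truncated subtraction in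
`ℝ≥0∞` is exactly the positive part), and `∞` when `u x = ∞`. -/
noncomputable def gslopeN {X : Type*} [MetricSpace X] (u : X → ℝ≥0∞) (x : X) : ℝ≥0∞ :=
  if u x = ⊤ then ⊤
  else ⨆ (y : X) (_ : y ≠ x), (u x - u y) / edist x y

/-- The operator `T u (x) = inf_y (u y + ℓ x · d(x,y)) / (1 + λ · d(x,y))` acting on
nonnegative extended-real valued functions. -/
noncomputable def TopE {X : Type*} [MetricSpace X] (lam : ℝ) (ℓ : X → ℝ)
    (u : X → ℝ≥0∞) (x : X) : ℝ≥0∞ :=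
  ⨅ y : X, (u y + ENNReal.ofReal (ℓ x) * edist x y) / (1 + ENNReal.ofReal lam * edist x y)

/-!
The operator `T` is monotone and `T w ≤ w`, so the iterates decrease to `v = ⨅ n, Tⁿ u`, and
letting `n → ∞` in `v ≤ Tⁿ⁺¹ u` gives `v ≤ T v`: `v` is a subsolution. For a finite function
with infimum `0` this means `λ v + G[v] ≤ ℓ`, and `v x ≤ v y + ℓ x · d(x,y)` makes `v` lsc.
Every subsolution `w ≤ u` satisfies `w ≤ Tⁿ u` for all `n`, so `v` is the largest subsolution
below `u`. Where `v = u` the supersolution inequality passes from `u` to `v`, since there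
`G[u] ≤ G[v]`. Where `v x₀ < u x₀` and `λ v + G[v] < ℓ` at `x₀`, Perron's method applies: the
maximum of `v` and a cone of slope slightly above `G[v] x₀` and height slightly above `v x₀`
is, by lower semicontinuity of `ℓ` and `u` at `x₀`, a subsolution below `u` exceeding `v` at `x₀`.
-/

section

variable {X : Type*} [MetricSpace X]

theorem gslopeN_le_iff {w : X → ℝ≥0∞} {x : X} (hx : w x ≠ ⊤) {K : ℝ≥0∞} :
    gslopeN w x ≤ K ↔ ∀ y, w x ≤ w y + K * edist x y := by
  rw [gslopeN, if_neg hx, iSup₂_le_iff]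
  refine forall_congr' fun y => ?_
  rcases eq_or_ne y x with rfl | hyx
  · simp
  · rw [ENNReal.div_le_iff (edist_pos.2 hyx.symm).ne' (edist_ne_top x y), tsub_le_iff_right,
      add_comm]
    exact imp_iff_right hyx

theorem le_add_gslopeN_mul {w : X → ℝ≥0∞} {x : X} (hx : w x ≠ ⊤) (y : X) :
    w x ≤ w y + gslopeN w x * edist x y :=
  (gslopeN_le_iff hx).1 le_rfl y

theorem gslopeN_le_gslopeN {u v : X → ℝ≥0∞} {x : X} (hle : v ≤ u) (hx : v x = u x) :
    gslopeN u x ≤ gslopeN v x := by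
  unfold gslopeN
  rw [hx]
  split_ifs
  · exact le_rfl
  · exact iSup₂_mono fun y _ => ENNReal.div_le_div_right (tsub_le_tsub_left (hle y) _) _

theorem lowerSemicontinuous_of_le_add_mul_edist {w K : X → ℝ≥0∞} (hK : ∀ x, K x ≠ ⊤)
    (h : ∀ x y, w x ≤ w y + K x * edist x y) : LowerSemicontinuous w := by
  intro x c hc
  have hK0 : Tendsto (fun y => K x * edist x y) (𝓝 x) (𝓝 0) := by
    simpa using ENNReal.Tendsto.const_mul
      ((tendsto_const_nhds (x := x)).edist (tendsto_id (x := 𝓝 x))) (Or.inr (hK x))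
  filter_upwards [hK0.eventually (gt_mem_nhds (tsub_pos_of_lt hc))] with y hy
  by_contra! hyc
  have : w x < w x := calc
    w x ≤ w y + K x * edist x y := h x y
    _ < c + (w x - c) := ENNReal.add_lt_add_of_le_of_lt (hyc.trans_lt hc).ne_top hyc hy
    _ = w x := add_tsub_cancel_of_le hc.le
  exact this.false

section Subsolution

variable (lam : ℝ) (ℓ : X → ℝ)

/-- Subsolutions of `λ w + G[w] = ℓ`, encoded as `w ≤ T w` with the division cleared
(`isSubsolution_iff_le_TopE`). -/
def IsSubsolution (w : X → ℝ≥0∞) : Prop :=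
  ∀ x y, w x * (1 + ENNReal.ofReal lam * edist x y) ≤ w y + ENNReal.ofReal (ℓ x) * edist x y

theorem TopE_le_div (w : X → ℝ≥0∞) (x y : X) :
    TopE lam ℓ w x ≤
      (w y + ENNReal.ofReal (ℓ x) * edist x y) / (1 + ENNReal.ofReal lam * edist x y) :=
  iInf_le _ y

theorem TopE_le_self (w : X → ℝ≥0∞) : TopE lam ℓ w ≤ w := fun x => by
  simpa using TopE_le_div lam ℓ w x x

theorem TopE_mono : Monotone (TopE lam ℓ) := fun _ _ h _ =>
  iInf_mono fun _ => ENNReal.div_le_div_right (add_le_add_left (h _) _) _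

theorem TopE_ne_top {w : X → ℝ≥0∞} {y : X} (hy : w y ≠ ⊤) (x : X) : TopE lam ℓ w x ≠ ⊤ := by
  refine ne_top_of_le_ne_top ?_ ((TopE_le_div lam ℓ w x y).trans
    (ENNReal.div_le_of_le_mul (le_mul_of_one_le_right' le_self_add)))
  exact ENNReal.add_ne_top.2 ⟨hy, ENNReal.mul_ne_top ofReal_ne_top (edist_ne_top x y)⟩

variable {lam ℓ}

theorem le_TopE_iff {a : ℝ≥0∞} {w : X → ℝ≥0∞} {x : X} :
    a ≤ TopE lam ℓ w x ↔
      ∀ y, a * (1 + ENNReal.ofReal lam * edist x y) ≤ w y + ENNReal.ofReal (ℓ x) * edist x y := by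
  simp only [TopE, le_iInf_iff]
  refine forall_congr' fun y => ENNReal.le_div_iff_mul_le (Or.inl ?_) (Or.inl ?_)
  · exact (zero_lt_one.trans_le le_self_add).ne'
  · exact ENNReal.add_ne_top.2 ⟨one_ne_top, ENNReal.mul_ne_top ofReal_ne_top (edist_ne_top x y)⟩

theorem isSubsolution_iff_le_TopE {w : X → ℝ≥0∞} :
    IsSubsolution lam ℓ w ↔ w ≤ TopE lam ℓ w :=
  forall_congr' fun _ => le_TopE_iff.symm

theorem IsSubsolution.le_add {w : X → ℝ≥0∞} (hw : IsSubsolution lam ℓ w) (x y : X) :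
    w x ≤ w y + ENNReal.ofReal (ℓ x) * edist x y :=
  (le_mul_of_one_le_right' le_self_add).trans (hw x y)

theorem IsSubsolution.lowerSemicontinuous {w : X → ℝ≥0∞} (hw : IsSubsolution lam ℓ w) :
    LowerSemicontinuous w :=
  lowerSemicontinuous_of_le_add_mul_edist (fun _ => ofReal_ne_top) hw.le_add

theorem IsSubsolution.ofReal_mul_le {w : X → ℝ≥0∞} (hw : IsSubsolution lam ℓ w)
    (hinf : ⨅ x, w x = 0) {x : X} (hx : w x ≠ ⊤) :
    ENNReal.ofReal lam * w x ≤ ENNReal.ofReal (ℓ x) := by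
  rcases eq_or_ne (w x) 0 with h0 | h0
  · simp [h0]
  obtain ⟨y, hy⟩ : ∃ y, w y < w x := iInf_lt_iff.1 (hinf ▸ pos_iff_ne_zero.2 h0)
  have hyx : y ≠ x := by rintro rfl; exact hy.false
  have : w x + ENNReal.ofReal lam * w x * edist x y ≤
      w x + ENNReal.ofReal (ℓ x) * edist x y := calc
    _ = w x * (1 + ENNReal.ofReal lam * edist x y) := by ring
    _ ≤ w y + ENNReal.ofReal (ℓ x) * edist x y := hw x y
    _ ≤ w x + ENNReal.ofReal (ℓ x) * edist x y := by gcongr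
  exact (ENNReal.mul_le_mul_iff_left (edist_pos.2 hyx.symm).ne' (edist_ne_top x y)).1
    ((ENNReal.add_le_add_iff_left hx).1 this)

theorem IsSubsolution.ofReal_mul_add_gslopeN_le {w : X → ℝ≥0∞} (hw : IsSubsolution lam ℓ w)
    (hinf : ⨅ x, w x = 0) {x : X} (hx : w x ≠ ⊤) :
    ENNReal.ofReal lam * w x + gslopeN w x ≤ ENNReal.ofReal (ℓ x) := by
  set a := ENNReal.ofReal lam * w x
  have ha : a ≤ ENNReal.ofReal (ℓ x) := hw.ofReal_mul_le hinf hx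
  suffices gslopeN w x ≤ ENNReal.ofReal (ℓ x) - a by
    simpa [add_tsub_cancel_of_le ha] using add_le_add_right this a
  refine (gslopeN_le_iff hx).2 fun y => ?_
  have had : a * edist x y ≠ ⊤ :=
    ENNReal.mul_ne_top (ENNReal.mul_ne_top ofReal_ne_top hx) (edist_ne_top x y)
  refine (ENNReal.add_le_add_iff_right had).1 ?_
  calc w x + a * edist x y = w x * (1 + ENNReal.ofReal lam * edist x y) := by ring
    _ ≤ w y + ENNReal.ofReal (ℓ x) * edist x y := hw x y
    _ = w y + (ENNReal.ofReal (ℓ x) - a) * edist x y + a * edist x y := by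
      rw [add_assoc, ← add_mul, tsub_add_cancel_of_le ha]

theorem IsSubsolution.sup {v φ : X → ℝ≥0∞} (hv : IsSubsolution lam ℓ v)
    (hφ : ∀ x, v x < φ x → ∀ y,
      φ x * (1 + ENNReal.ofReal lam * edist x y) ≤ φ y + ENNReal.ofReal (ℓ x) * edist x y) :
    IsSubsolution lam ℓ (v ⊔ φ) := by
  intro x y
  rcases le_or_gt (φ x) (v x) with hx | hx
  · rw [Pi.sup_apply, sup_eq_left.2 hx]
    exact (hv x y).trans (by gcongr; exact le_sup_left)
  · rw [Pi.sup_apply, sup_eq_right.2 hx.le]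
    exact (hφ x hx y).trans (by gcongr; exact le_sup_right)

end Subsolution

section Iteration

variable (lam : ℝ) (ℓ : X → ℝ) (u : X → ℝ≥0∞)

noncomputable def iterInf (x : X) : ℝ≥0∞ := ⨅ n : ℕ, (TopE lam ℓ)^[n] u x

theorem antitone_iterate_TopE : Antitone fun n => (TopE lam ℓ)^[n] u :=
  antitone_nat_of_succ_le fun n => by
    rw [Function.iterate_succ_apply']
    exact TopE_le_self lam ℓ _

theorem tendsto_iterate_TopE (x : X) :
    Tendsto (fun n => (TopE lam ℓ)^[n] u x) atTop (𝓝 (iterInf lam ℓ u x)) :=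
  tendsto_atTop_iInf fun _ _ h => antitone_iterate_TopE lam ℓ u h x

theorem iterInf_le_iterate (n : ℕ) : iterInf lam ℓ u ≤ (TopE lam ℓ)^[n] u :=
  fun _ => iInf_le _ n

theorem iterInf_le_self : iterInf lam ℓ u ≤ u :=
  iterInf_le_iterate lam ℓ u 0

theorem iterInf_ne_top {y : X} (hy : u y ≠ ⊤) (x : X) : iterInf lam ℓ u x ≠ ⊤ :=
  ne_top_of_le_ne_top (TopE_ne_top lam ℓ hy x) (iterInf_le_iterate lam ℓ u 1 x)

theorem iInf_iterInf_eq_zero (hu : ⨅ x, u x = 0) : ⨅ x, iterInf lam ℓ u x = 0 :=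
  le_antisymm (hu ▸ iInf_mono (iterInf_le_self lam ℓ u)) bot_le

theorem isSubsolution_iterInf : IsSubsolution lam ℓ (iterInf lam ℓ u) := by
  intro x y
  calc iterInf lam ℓ u x * (1 + ENNReal.ofReal lam * edist x y)
      ≤ ⨅ n : ℕ, ((TopE lam ℓ)^[n] u y + ENNReal.ofReal (ℓ x) * edist x y) := by
        refine le_iInf fun n => le_TopE_iff.1 ?_ y
        simpa only [Function.iterate_succ_apply'] using iterInf_le_iterate lam ℓ u (n + 1) x
    _ = iterInf lam ℓ u y + ENNReal.ofReal (ℓ x) * edist x y := ENNReal.iInf_add.symm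

theorem IsSubsolution.le_iterInf {lam ℓ u} {w : X → ℝ≥0∞} (hw : IsSubsolution lam ℓ w)
    (hwu : w ≤ u) : w ≤ iterInf lam ℓ u := by
  have : ∀ n, w ≤ (TopE lam ℓ)^[n] u := by
    intro n
    induction n with
    | zero => exact hwu
    | succ n ih =>
      rw [Function.iterate_succ_apply']
      exact (isSubsolution_iff_le_TopE.1 hw).trans (TopE_mono lam ℓ ih)
  exact fun x => le_iInf fun n => this n x

end Iteration

section Perron

noncomputable def cone (x₀ : X) (a C : ℝ≥0∞) (z : X) : ℝ≥0∞ := a - C * edist x₀ z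

variable {x₀ : X} {a C : ℝ≥0∞}

theorem cone_le_add (x y : X) : cone x₀ a C x ≤ cone x₀ a C y + C * edist x y := by
  rw [cone, tsub_le_iff_right]
  calc a ≤ cone x₀ a C y + C * edist x₀ y := le_tsub_add
    _ ≤ cone x₀ a C y + C * (edist x₀ x + edist x y) := by gcongr; exact edist_triangle _ _ _
    _ = cone x₀ a C y + C * edist x y + C * edist x₀ x := by ring

theorem cone_mul_le {c L : ℝ≥0∞} (hL : C + c * a ≤ L) (x y : X) :
    cone x₀ a C x * (1 + c * edist x y) ≤ cone x₀ a C y + L * edist x y :=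
  calc cone x₀ a C x * (1 + c * edist x y) = cone x₀ a C x + cone x₀ a C x * (c * edist x y) := by
        ring
    _ ≤ cone x₀ a C y + C * edist x y + a * (c * edist x y) := by
        gcongr
        · exact cone_le_add x y
        · exact tsub_le_self
    _ = cone x₀ a C y + (C + c * a) * edist x y := by ring
    _ ≤ cone x₀ a C y + L * edist x y := by gcongr

theorem edist_lt_of_lt_cone {v : X → ℝ≥0∞} {z : X} {G η δ r : ℝ≥0∞} (hG : G ≠ ⊤)
    (hη : η ≠ 0) (hηtop : η ≠ ⊤) (hδr : δ ≤ η * r) (hvz : v z ≠ ⊤)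
    (hslope : v x₀ ≤ v z + G * edist x₀ z) (h : v z < cone x₀ (v x₀ + δ) (G + η) z) :
    edist x₀ z < r := by
  have hfin : v z + G * edist x₀ z ≠ ⊤ :=
    ENNReal.add_ne_top.2 ⟨hvz, ENNReal.mul_ne_top hG (edist_ne_top _ _)⟩
  refine (ENNReal.mul_lt_mul_iff_right hη hηtop).1 ((ENNReal.add_lt_add_iff_left hfin).1 ?_)
  calc v z + G * edist x₀ z + η * edist x₀ z = v z + (G + η) * edist x₀ z := by ring
    _ < v x₀ + δ := lt_tsub_iff_right.1 h
    _ ≤ v z + G * edist x₀ z + η * r := by gcongr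

variable {lam : ℝ} {ℓ : X → ℝ} {u v : X → ℝ≥0∞}

theorem IsSubsolution.sup_cone (hv : IsSubsolution lam ℓ v) (hvfin : ∀ x, v x ≠ ⊤)
    {G η δ r : ℝ≥0∞} (hG : G ≠ ⊤) (hη : η ≠ 0) (hηtop : η ≠ ⊤) (hδr : δ ≤ η * r)
    (hslope : ∀ z, v x₀ ≤ v z + G * edist x₀ z)
    (hℓ : ∀ z, edist x₀ z < r → G + η + ENNReal.ofReal lam * (v x₀ + δ) ≤ ENNReal.ofReal (ℓ z)) :
    IsSubsolution lam ℓ (v ⊔ cone x₀ (v x₀ + δ) (G + η)) :=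
  hv.sup fun x hx =>
    cone_mul_le (hℓ x (edist_lt_of_lt_cone hG hη hηtop hδr (hvfin x) (hslope x) hx)) x

theorem IsSubsolution.exists_gt_of_lt (hv : IsSubsolution lam ℓ v)
    (hvfin : ∀ x, v x ≠ ⊤) (hvu : v ≤ u)
    (hℓ : LowerSemicontinuousAt (fun x => ENNReal.ofReal (ℓ x)) x₀)
    (hu : LowerSemicontinuousAt u x₀) (hlt : v x₀ < u x₀)
    (hB : ENNReal.ofReal lam * v x₀ + gslopeN v x₀ < ENNReal.ofReal (ℓ x₀)) :
    ∃ w, IsSubsolution lam ℓ w ∧ w ≤ u ∧ v x₀ < w x₀ := by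
  set G := gslopeN v x₀
  set B := ENNReal.ofReal lam * v x₀ + G
  have hG : G ≠ ⊤ := ne_top_of_le_ne_top hB.ne_top le_add_self
  obtain ⟨c', hBc', hc'⟩ := exists_between hB
  obtain ⟨c, hc'c, hc⟩ := exists_between hc'
  obtain ⟨b, hvb, hbu⟩ := exists_between hlt
  obtain ⟨r, hr, hball⟩ : ∃ r > 0, ∀ z, edist x₀ z < r → c < ENNReal.ofReal (ℓ z) ∧ b < u z := by
    obtain ⟨r, hr, hsub⟩ := EMetric.mem_nhds_iff.1 ((hℓ c hc).and (hu b hbu))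
    exact ⟨r, hr, fun z hz => hsub (by rwa [Metric.mem_eball, edist_comm])⟩
  set η := c' - B
  have hη : η ≠ 0 := (tsub_pos_of_lt hBc').ne'
  have hηtop : η ≠ ⊤ := ne_top_of_le_ne_top (hc'c.trans hc).ne_top tsub_le_self
  -- `δ ≤ b - v x₀` keeps the cone below `u`, `λ δ ≤ c - c'` keeps it a subsolution where
  -- `c < ℓ`, and `δ ≤ η r` confines the set where it exceeds `v` to the ball of radius `r`.
  set δ := min (b - v x₀) (min ((c - c') / ENNReal.ofReal lam) (η * r))
  have hδ : δ ≠ 0 := (lt_min (tsub_pos_of_lt hvb) (lt_min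
    (ENNReal.div_pos (tsub_pos_of_lt hc'c).ne' ofReal_ne_top) (ENNReal.mul_pos hη hr.ne'))).ne'
  have hδr : δ ≤ η * r := (min_le_right _ _).trans (min_le_right _ _)
  have hℓz : ∀ z, edist x₀ z < r →
      G + η + ENNReal.ofReal lam * (v x₀ + δ) ≤ ENNReal.ofReal (ℓ z) := fun z hz => calc
    _ = B + η + ENNReal.ofReal lam * δ := by ring
    _ ≤ c' + (c - c') := by
        rw [add_tsub_cancel_of_le hBc'.le]
        gcongr
        calc ENNReal.ofReal lam * δ ≤ ENNReal.ofReal lam * ((c - c') / ENNReal.ofReal lam) := by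
              gcongr; exact (min_le_right _ _).trans (min_le_left _ _)
          _ ≤ c - c' := ENNReal.mul_div_le
    _ = c := add_tsub_cancel_of_le hc'c.le
    _ ≤ ENNReal.ofReal (ℓ z) := (hball z hz).1.le
  set φ := cone x₀ (v x₀ + δ) (G + η)
  have hwsub : IsSubsolution lam ℓ (v ⊔ φ) :=
    hv.sup_cone hvfin hG hη hηtop hδr (le_add_gslopeN_mul (hvfin x₀)) hℓz
  have hwu : v ⊔ φ ≤ u := fun z => by
    refine max_le (hvu z) ?_
    rcases le_or_gt (φ z) (v z) with hz | hz
    · exact hz.trans (hvu z)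
    · calc φ z ≤ v x₀ + δ := tsub_le_self
        _ ≤ b := add_le_of_le_tsub_left_of_le hvb.le (min_le_left _ _)
        _ ≤ u z := (hball z (edist_lt_of_lt_cone hG hη hηtop hδr (hvfin z)
          (le_add_gslopeN_mul (hvfin x₀) z) hz)).2.le
  refine ⟨v ⊔ φ, hwsub, hwu, (ENNReal.lt_add_right (hvfin x₀) hδ).trans_le ?_⟩
  exact le_sup_of_le_right (by simp [φ, cone])

theorem IsSubsolution.ofReal_le_of_lt_of_maximal (hv : IsSubsolution lam ℓ v)
    (hvfin : ∀ x, v x ≠ ⊤) (hvu : v ≤ u) (hmax : ∀ w, IsSubsolution lam ℓ w → w ≤ u → w ≤ v)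
    (hℓ : LowerSemicontinuousAt (fun x => ENNReal.ofReal (ℓ x)) x₀)
    (hu : LowerSemicontinuousAt u x₀) (hlt : v x₀ < u x₀) :
    ENNReal.ofReal (ℓ x₀) ≤ ENNReal.ofReal lam * v x₀ + gslopeN v x₀ := by
  by_contra! hB
  obtain ⟨w, hw, hwu, hvw⟩ := hv.exists_gt_of_lt hvfin hvu hℓ hu hlt hB
  exact (hvw.trans_le (hmax w hw hwu x₀)).false

end Perron

end

theorem limit_of_iterates_is_solution_general {X : Type*} [MetricSpace X]
    (lam : ℝ)
    (ℓ : X → ℝ) (hℓ : LowerSemicontinuous ℓ)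
    (u : X → ℝ≥0∞) (hu : LowerSemicontinuous u) (hinfu : ⨅ x, u x = 0)
    (hsuper : ∀ x, ENNReal.ofReal (ℓ x) ≤ ENNReal.ofReal lam * u x + gslopeN u x) :
    ∃ v : X → ℝ≥0∞,
      (∀ x, Tendsto (fun n => (TopE lam ℓ)^[n] u x) atTop (𝓝 (v x))) ∧
      LowerSemicontinuous v ∧ (∀ x, v x ≠ ⊤) ∧ (⨅ x, v x = 0) ∧
      ∀ x, ENNReal.ofReal lam * v x + gslopeN v x = ENNReal.ofReal (ℓ x) := by
  set v := iterInf lam ℓ u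
  obtain ⟨y, hy⟩ : ∃ y, u y < ⊤ := iInf_lt_iff.1 (hinfu ▸ zero_lt_top)
  have hvfin : ∀ x, v x ≠ ⊤ := iterInf_ne_top lam ℓ u hy.ne
  have hv : IsSubsolution lam ℓ v := isSubsolution_iterInf lam ℓ u
  have hvinf : ⨅ x, v x = 0 := iInf_iterInf_eq_zero lam ℓ u hinfu
  have hvu : v ≤ u := iterInf_le_self lam ℓ u
  have hL : LowerSemicontinuous fun x => ENNReal.ofReal (ℓ x) :=
    ENNReal.continuous_ofReal.comp_lowerSemicontinuous hℓ fun _ _ => ENNReal.ofReal_le_ofReal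
  refine ⟨v, tendsto_iterate_TopE lam ℓ u, hv.lowerSemicontinuous, hvfin, hvinf,
    fun x => le_antisymm (hv.ofReal_mul_add_gslopeN_le hvinf (hvfin x)) ?_⟩
  rcases (hvu x).eq_or_lt with heq | hlt
  · calc ENNReal.ofReal (ℓ x) ≤ ENNReal.ofReal lam * u x + gslopeN u x := hsuper x
      _ ≤ ENNReal.ofReal lam * v x + gslopeN v x := by
        rw [← heq]
        gcongr
        exact gslopeN_le_gslopeN hvu heq
  · exact hv.ofReal_le_of_lt_of_maximal hvfin hvu (fun _ hw hwu => hw.le_iterInf hwu)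
      (hL x) (hu x) hlt

/-- If `u` is a supersolution of the discounted global Eikonal equation `λ w + G[w] = ℓ`
(`u` lsc, `inf u = 0`, `λ u + G[u] ≥ ℓ`), then the pointwise limit `v` of the iterates
`Tⁿ u` is a solution: `v` is lsc, real-valued, `inf v = 0` and `λ v + G[v] = ℓ`. -/
theorem limit_of_iterates_is_solution {X : Type*} [MetricSpace X] [Nonempty X]
    (lam : ℝ) (hlam : 0 ≤ lam)
    (ℓ : X → ℝ) (hℓ : LowerSemicontinuous ℓ) (hℓ0 : ∀ x, 0 ≤ ℓ x)
    (hinfℓ : ⨅ x, ℓ x = 0)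
    (u : X → ℝ≥0∞) (hu : LowerSemicontinuous u) (hinfu : ⨅ x, u x = 0)
    (hsuper : ∀ x, ENNReal.ofReal (ℓ x) ≤ ENNReal.ofReal lam * u x + gslopeN u x) :
    ∃ v : X → ℝ≥0∞,
      (∀ x, Tendsto (fun n => (TopE lam ℓ)^[n] u x) atTop (𝓝 (v x))) ∧
      LowerSemicontinuous v ∧ (∀ x, v x ≠ ⊤) ∧ (⨅ x, v x = 0) ∧
      ∀ x, ENNReal.ofReal lam * v x + gslopeN v x = ENNReal.ofReal (ℓ x) :=
  limit_of_iterates_is_solution_general lam ℓ hℓ u hu hinfu hsuper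
end

section
/- Let X be a metric space, x₀ ∈ X, and ℓ : X → [0,∞) given by ℓ(x₀)=0 and ℓ(x)=1 for x ≠ x₀. Then X is complete if and only if the equation G[u] = ℓ with u lsc, u ≥ 0, inf_X u = 0 has a unique solution, namely u(x) = d(x, x₀). -/
/-!
If `X` is complete, Ekeland's variational principle applied to a solution `u` from any point
`x` with parameter `ε < 1` produces a point `z` with `u z + ε d(x, z) ≤ u x` at which the slope
of `u` is at most `ε`; since the slope is `1` away from `x₀`, `z = x₀`, and letting `ε → 1`
gives `u ≥ d(·, x₀)`, while slope `≤ 1` gives the reverse inequality.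

If `X` is not complete, pick a point `p` of its completion outside `X`. The distance to
`{x₀, p}`, restricted to `X`, is another solution: its slope is `1` wherever it is positive,
because points of `X` come arbitrarily close to `p`.
-/

open Filter Topology ENNReal Metric Set

/-- The global slope of a real-valued function `u` on a metric space:
`G[u](x) = sup_{y ≠ x} (u x - u y)⁺ / d(x,y)`, with values in `[0, ∞]`. -/
noncomputable def gslope {X : Type*} [MetricSpace X] (u : X → ℝ) (x : X) : ℝ≥0∞ :=
  ⨆ (y : X) (_ : y ≠ x), ENNReal.ofReal ((u x - u y) / dist x y)

theorem ciInf_eq_of_forall_le {ι α : Type*} [ConditionallyCompleteLattice α] {f : ι → α} {i : ι}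
    (h : ∀ j, f i ≤ f j) : ⨅ j, f j = f i :=
  have : Nonempty ι := ⟨i⟩
  (IsLeast.isGLB ⟨mem_range_self i, forall_mem_range.2 h⟩).ciInf_eq

section Slope

variable {X : Type*} [MetricSpace X] {u : X → ℝ} {x : X}

theorem gslope_le_ofReal_iff {c : ℝ} (hc : 0 ≤ c) :
    gslope u x ≤ ENNReal.ofReal c ↔ ∀ y, u x - u y ≤ c * dist x y := by
  refine iSup₂_le_iff.trans (forall_congr' fun y => ?_)
  rcases eq_or_ne y x with rfl | hy
  · simp
  · rw [ENNReal.ofReal_le_ofReal_iff hc, div_le_iff₀ (dist_pos.2 hy.symm)]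
    exact ⟨fun h => h hy, fun h _ => h⟩

theorem gslope_le_one_iff : gslope u x ≤ 1 ↔ ∀ y, u x - u y ≤ dist x y := by
  simpa using gslope_le_ofReal_iff (u := u) (x := x) zero_le_one

theorem gslope_eq_zero_iff : gslope u x = 0 ↔ ∀ y, u x ≤ u y := by
  simpa [sub_nonpos] using gslope_le_ofReal_iff (u := u) (x := x) le_rfl

theorem one_le_gslope_of_forall_exists (h : ∀ c, 0 ≤ c → c < 1 → ∃ y, c * dist x y < u x - u y) :
    1 ≤ gslope u x := by
  by_contra! hlt
  obtain ⟨c, hc, hlt, hc1⟩ := ENNReal.lt_iff_exists_real_btwn.1 hlt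
  obtain ⟨y, hy⟩ := h c hc (ENNReal.ofReal_lt_one.1 hc1)
  exact hy.not_ge ((gslope_le_ofReal_iff hc).1 hlt.le y)

theorem gslope_infDist_comp_eq_one {Y : Type*} [PseudoMetricSpace Y] {ι : X → Y}
    (hι : Isometry ι) (hd : DenseRange ι) {S : Set Y} (hx : 0 < infDist (ι x) S) :
    gslope (fun y => infDist (ι y) S) x = 1 := by
  refine le_antisymm (gslope_le_one_iff.2 fun y => ?_) (one_le_gslope_of_forall_exists ?_)
  · rw [← hι.dist_eq]
    linarith [infDist_le_infDist_add_dist (x := ι x) (y := ι y) (s := S)]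
  intro c hc hc1
  set D := infDist (ι x) S
  have hS : S.Nonempty := nonempty_iff_ne_empty.2 fun h => by simp [D, h] at hx
  -- approach `S` within `η` from `X`; `η` is chosen so that `c (D + 2η) < D - η`
  set η := D * (1 - c) / 3 with hη_def
  have hc1' : 0 < 1 - c := by linarith
  have hη : 0 < η := by positivity
  obtain ⟨s, hs, hxs⟩ := (infDist_lt_iff hS).1 (lt_add_of_pos_right D hη)
  obtain ⟨y, hys⟩ := hd.exists_dist_lt s hη
  have hy : infDist (ι y) S < η := (infDist_le_dist_of_mem hs).trans_lt (by rwa [dist_comm])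
  have hxy : dist x y < D + 2 * η := by
    rw [← hι.dist_eq]
    linarith [dist_triangle (ι x) s (ι y)]
  refine ⟨y, ?_⟩
  nlinarith [mul_le_mul_of_nonneg_left hxy.le hc, mul_pos hη hc1']

theorem gslope_dist_self (x₀ : X) : gslope (fun y => dist y x₀) x₀ = 0 :=
  gslope_eq_zero_iff.2 fun y => by simp

theorem gslope_dist_eq_one {x₀ : X} (hx : x ≠ x₀) : gslope (fun y => dist y x₀) x = 1 := by
  simpa only [infDist_singleton, id_eq] using
    gslope_infDist_comp_eq_one isometry_id denseRange_id (S := {x₀}) (x := x)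
      (by simpa only [infDist_singleton, id_eq] using dist_pos.2 hx)

end Slope

section Ekeland

variable {X : Type*} [MetricSpace X] {u : X → ℝ} {ε : ℝ}

/-- The points `y` that Ekeland's principle still allows after `z`. -/
def ekelandSet (u : X → ℝ) (ε : ℝ) (z : X) : Set X :=
  {y | u y + ε * dist z y ≤ u z}

theorem self_mem_ekelandSet (z : X) : z ∈ ekelandSet u ε z := by
  simp [ekelandSet]

theorem ekelandSet_subset (hε : 0 ≤ ε) {y z : X} (hy : y ∈ ekelandSet u ε z) :
    ekelandSet u ε y ⊆ ekelandSet u ε z := fun w hw => by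
  have := mul_le_mul_of_nonneg_left (dist_triangle z y w) hε
  simp only [ekelandSet, mem_ofPred_eq] at hy hw ⊢
  linarith

theorem isClosed_ekelandSet (hu : LowerSemicontinuous u) (z : X) :
    IsClosed (ekelandSet u ε z) :=
  (hu.add (continuous_const.mul (continuous_const.dist continuous_id)).lowerSemicontinuous)
    |>.isClosed_preimage (u z)

/-- A near-minimizer of `u` on `ekelandSet u ε z` has a small Ekeland set. -/
theorem exists_mem_ekelandSet_subset_closedBall (hε : 0 < ε) (hb : BddBelow (range u)) (z : X)
    {r : ℝ} (hr : 0 < r) :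
    ∃ z' ∈ ekelandSet u ε z, ekelandSet u ε z' ⊆ closedBall z' r := by
  obtain ⟨_, ⟨z', hz', rfl⟩, hlt⟩ := Real.lt_sInf_add_pos
    (⟨u z, z, self_mem_ekelandSet z, rfl⟩ : (u '' ekelandSet u ε z).Nonempty) (mul_pos hε hr)
  refine ⟨z', hz', fun y hy => ?_⟩
  have hinf : sInf (u '' ekelandSet u ε z) ≤ u y :=
    csInf_le (hb.mono (image_subset_range _ _)) ⟨y, ekelandSet_subset hε.le hz' hy, rfl⟩
  have hy' : u y + ε * dist z' y ≤ u z' := hy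
  rw [mem_closedBall, dist_comm]
  nlinarith

theorem exists_seq_ekelandSet (hε : 0 < ε) (hb : BddBelow (range u)) (x : X) :
    ∃ z : ℕ → X, z 0 ∈ ekelandSet u ε x ∧ (∀ n, z (n + 1) ∈ ekelandSet u ε (z n)) ∧
      ∀ n, ekelandSet u ε (z n) ⊆ closedBall (z n) (1 / ((n : ℝ) + 1)) := by
  choose next hnext_mem hnext_ball using fun (z : X) (n : ℕ) =>
    exists_mem_ekelandSet_subset_closedBall hε hb z (r := 1 / ((n : ℝ) + 1)) (by positivity)
  let z : ℕ → X := fun n => Nat.rec (next x 0) (fun n z => next z (n + 1)) n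
  refine ⟨z, hnext_mem x 0, fun n => hnext_mem (z n) (n + 1), fun n => ?_⟩
  cases n
  · exact hnext_ball x 0
  · exact hnext_ball _ _

/-- Ekeland's variational principle. -/
theorem LowerSemicontinuous.exists_ekeland [CompleteSpace X] (hu : LowerSemicontinuous u)
    (hb : BddBelow (range u)) (hε : 0 < ε) (x : X) :
    ∃ z, u z + ε * dist x z ≤ u x ∧ ∀ y ≠ z, u z < u y + ε * dist z y := by
  obtain ⟨z, hz0, hzsucc, hball⟩ := exists_seq_ekelandSet hε hb x
  have hanti : Antitone fun n => ekelandSet u ε (z n) :=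
    antitone_nat_of_succ_le fun n => ekelandSet_subset hε.le (hzsucc n)
  have hdist : ∀ n, ∀ a ∈ ekelandSet u ε (z n), ∀ b ∈ ekelandSet u ε (z n),
      dist a b ≤ 2 * (1 / ((n : ℝ) + 1)) := fun n a ha b hb => by
    have ha' := mem_closedBall.1 (hball n ha)
    have hb' := mem_closedBall.1 (hball n hb)
    linarith [dist_triangle_right a b (z n)]
  have hr : Tendsto (fun n : ℕ => 2 * (1 / ((n : ℝ) + 1))) atTop (𝓝 0) := by
    simpa using tendsto_one_div_add_atTop_nhds_zero_nat.const_mul (2 : ℝ)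
  have hcauchy : CauchySeq z := cauchySeq_of_le_tendsto_0 _ (fun m n N hm hn =>
    hdist N _ (hanti hm (self_mem_ekelandSet _)) _ (hanti hn (self_mem_ekelandSet _))) hr
  obtain ⟨zlim, hlim⟩ := cauchySeq_tendsto_of_complete hcauchy
  have hmem : ∀ n, zlim ∈ ekelandSet u ε (z n) := fun n =>
    (isClosed_ekelandSet hu _).mem_of_tendsto hlim
      ((eventually_ge_atTop n).mono fun m hm => hanti hm (self_mem_ekelandSet _))
  refine ⟨zlim, ekelandSet_subset hε.le hz0 (hmem 0), fun y hy => ?_⟩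
  by_contra! hyz
  have hy_mem : ∀ n, y ∈ ekelandSet u ε (z n) := fun n => ekelandSet_subset hε.le (hmem n) hyz
  exact hy (dist_le_zero.1 (ge_of_tendsto' hr fun n => hdist n _ (hy_mem n) _ (hmem n)))

end Ekeland

section Complete

variable {X : Type*} [MetricSpace X] [CompleteSpace X] {u : X → ℝ} {x₀ : X}

theorem dist_le_sub_of_one_le_gslope (hu : LowerSemicontinuous u) (hb : BddBelow (range u))
    (h : ∀ x ≠ x₀, 1 ≤ gslope u x) (x : X) : dist x x₀ ≤ u x - u x₀ := by
  have key : ∀ ε, 0 < ε → ε < 1 → ε * dist x x₀ ≤ u x - u x₀ := by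
    intro ε hε hε1
    obtain ⟨z, hzx, hmin⟩ := hu.exists_ekeland hb hε x
    obtain rfl : z = x₀ := by
      by_contra hz
      have hslope : gslope u z ≤ ENNReal.ofReal ε := (gslope_le_ofReal_iff hε.le).2 fun y => by
        rcases eq_or_ne y z with rfl | hy
        · simp
        · linarith [hmin y hy]
      exact (h z hz).not_gt (hslope.trans_lt (ENNReal.ofReal_lt_one.2 hε1))
    linarith
  have hlim : Tendsto (fun ε => ε * dist x x₀) (𝓝[<] 1) (𝓝 (dist x x₀)) := by
    simpa using ((continuous_mul_const (dist x x₀)).tendsto 1).mono_left nhdsWithin_le_nhds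
  exact le_of_tendsto hlim (eventually_of_mem (Ioo_mem_nhdsLT zero_lt_one)
    fun ε hε => key ε hε.1 hε.2)

theorem eq_add_dist_of_gslope_eq_one (hu : LowerSemicontinuous u) (hb : BddBelow (range u))
    (h : ∀ x ≠ x₀, gslope u x = 1) (x : X) : u x = u x₀ + dist x x₀ := by
  have hge := dist_le_sub_of_one_le_gslope hu hb (fun x hx => (h x hx).ge) x
  rcases eq_or_ne x x₀ with rfl | hx
  · simp
  · linarith [gslope_le_one_iff.1 (h x hx).le x₀]

end Complete

section Incomplete

open UniformSpace

variable {X : Type*} [MetricSpace X]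

theorem exists_notMem_range_coe_completion (hX : ¬CompleteSpace X) :
    ∃ p : Completion X, p ∉ range ((↑) : X → Completion X) := by
  by_contra! h
  refine hX ((completeSpace_iff_isComplete_range Completion.coe_isometry.isUniformInducing).2 ?_)
  rw [eq_univ_of_forall h]
  exact isComplete_univ

/-- The distance to `{x₀, p}` in the completion, for a missing limit point `p`, is a second
solution. -/
theorem exists_gslope_eq_one_lt_dist (hX : ¬CompleteSpace X) (x₀ : X) :
    ∃ v : X → ℝ, Continuous v ∧ (∀ x, 0 ≤ v x) ∧ v x₀ = 0 ∧ (∀ x ≠ x₀, gslope v x = 1) ∧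
      ∃ x, v x < dist x x₀ := by
  obtain ⟨p, hp⟩ := exists_notMem_range_coe_completion hX
  set S : Set (Completion X) := {(x₀ : Completion X), p}
  have hpx₀ : 0 < dist (x₀ : Completion X) p := dist_pos.2 fun h => hp ⟨x₀, h⟩
  refine ⟨fun x => infDist (x : Completion X) S, (continuous_infDist_pt S).comp
    (Completion.continuous_coe X), fun x => infDist_nonneg, infDist_zero_of_mem (by simp [S]),
    fun x hx => gslope_infDist_comp_eq_one Completion.coe_isometry Completion.denseRange_coe ?_, ?_⟩
  · refine ((Set.toFinite S).isClosed.notMem_iff_infDist_pos (insert_nonempty _ _)).1 ?_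
    rintro (h | h)
    · exact hx (Completion.coe_injective X h)
    · exact hp ⟨x, h⟩
  · obtain ⟨x, hx⟩ := Completion.denseRange_coe.exists_dist_lt p (half_pos hpx₀)
    have hv : infDist (x : Completion X) S ≤ dist (x : Completion X) p :=
      infDist_le_dist_of_mem (by simp [S])
    refine ⟨x, hv.trans_lt ?_⟩
    rw [← Completion.dist_eq x x₀]
    linarith [dist_triangle_left (x₀ : Completion X) p x, dist_comm p (x : Completion X)]

end Incomplete

/-- Characterization of completeness: with `ℓ(x₀) = 0` and `ℓ ≡ 1` elsewhere, `X` is complete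
iff the equation `G[u] = ℓ`, `u` lsc nonnegative with `inf u = 0`, has `d(·, x₀)` as its
unique solution. -/
theorem completeSpace_iff_unique_solution {X : Type*} [MetricSpace X]
    (x₀ : X) (ℓ : X → ℝ) (hℓ1 : ℓ x₀ = 0) (hℓ2 : ∀ x, x ≠ x₀ → ℓ x = 1) :
    CompleteSpace X ↔
      ((LowerSemicontinuous (fun x => dist x x₀) ∧ (∀ x : X, 0 ≤ dist x x₀) ∧
          (⨅ x : X, dist x x₀) = 0 ∧
          ∀ x, gslope (fun y => dist y x₀) x = ENNReal.ofReal (ℓ x)) ∧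
        ∀ u : X → ℝ, LowerSemicontinuous u → (∀ x, 0 ≤ u x) → (⨅ x, u x) = 0 →
          (∀ x, gslope u x = ENNReal.ofReal (ℓ x)) → u = fun x => dist x x₀) := by
  have hℓ : ∀ u : X → ℝ, (∀ x, gslope u x = ENNReal.ofReal (ℓ x)) ↔
      gslope u x₀ = 0 ∧ ∀ x ≠ x₀, gslope u x = 1 := fun u => by
    refine ⟨fun h => ⟨by simp [h, hℓ1], fun x hx => by simp [h, hℓ2 x hx]⟩, fun ⟨h0, h1⟩ x => ?_⟩
    rcases eq_or_ne x x₀ with rfl | hx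
    · simp [h0, hℓ1]
    · simp [h1 x hx, hℓ2 x hx]
  simp only [hℓ]
  constructor
  · intro _
    refine ⟨⟨(continuous_id.dist continuous_const).lowerSemicontinuous, fun _ => dist_nonneg,
      by simpa using ciInf_eq_of_forall_le (f := fun x => dist x x₀) (i := x₀) (by simp),
      gslope_dist_self x₀, fun x hx => gslope_dist_eq_one hx⟩, ?_⟩
    rintro u hu hpos hinf ⟨-, h1⟩
    have hadd := eq_add_dist_of_gslope_eq_one hu ⟨0, forall_mem_range.2 hpos⟩ h1
    have hmin : ∀ x, u x₀ ≤ u x := fun x => by linarith [hadd x, dist_nonneg (x := x) (y := x₀)]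
    have hu₀ : u x₀ = 0 := by rw [← hinf, ciInf_eq_of_forall_le hmin]
    funext x
    rw [hadd x, hu₀, zero_add]
  · rintro ⟨-, huniq⟩
    by_contra hX
    obtain ⟨v, hv, hvpos, hv₀, hv1, x, hx⟩ := exists_gslope_eq_one_lt_dist hX x₀
    have hmin : ∀ x, v x₀ ≤ v x := fun x => hv₀ ▸ hvpos x
    have hv_eq := huniq v hv.lowerSemicontinuous hvpos (by rw [ciInf_eq_of_forall_le hmin, hv₀])
      ⟨gslope_eq_zero_iff.2 hmin, hv1⟩
    exact hx.ne (congrFun hv_eq x)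
end
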